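/- arXiv:1801.06585 — 2 statements merged into one kernel-verified Lean document; each statement's English description precedes it below -/
import Mathlib

section
/- If a face F of a triangulation is locally z-knotted and its z-monodromy is the identity or D_F, then the unique zigzag through F (up to reversal) passes through each of the three edges of F exactly twice, both times in the same direction; specifically, it traverses twice each of the three oriented edges forming one cycle of D_F. -/
open Finset

/-- A (combinatorial) triangulation of a connected closed surface:
a finite set of triangular faces such that every edge lies in exactly two
faces, two distinct faces meet in at most an edge, and the dual graph is
connected. -/
structure Triangulation (V : Type) [Fintype V] [DecidableEq V] where
  faces : Finset (Finset V)
  faces_nonempty : faces.Nonempty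
  card_eq : ∀ F ∈ faces, F.card = 3
  edge_two_faces : ∀ e : Finset V, e.card = 2 → (∃ F ∈ faces, e ⊆ F) →
      (faces.filter fun F => e ⊆ F).card = 2
  inter_le : ∀ F ∈ faces, ∀ F' ∈ faces, F ≠ F' → (F ∩ F').card ≤ 2
  connected : ∀ F ∈ faces, ∀ F' ∈ faces,
      Relation.ReflTransGen
        (fun A B => A ∈ faces ∧ B ∈ faces ∧ (A ∩ B).card = 2) F F'

namespace Triangulation

variable {V : Type} [Fintype V] [DecidableEq V] (T : Triangulation V)

/-- `e` is an edge of the triangulation. -/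
def IsEdge (e : Finset V) : Prop := e.card = 2 ∧ ∃ F ∈ T.faces, e ⊆ F

/-- A zigzag sequence: consecutive edges are adjacent (distinct, sharing a
vertex and a face), the faces containing consecutive pairs are distinct, and
edges two apart are disjoint. -/
def IsZigzagSeq (f : ℕ → Finset V) : Prop :=
  (∀ i, T.IsEdge (f i)) ∧
  (∀ i, f i ≠ f (i + 1) ∧ (f i ∩ f (i + 1)).Nonempty ∧
      ∃ F ∈ T.faces, f i ⊆ F ∧ f (i + 1) ⊆ F) ∧
  (∀ i, ∀ F ∈ T.faces, ∀ F' ∈ T.faces,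
      f i ⊆ F → f (i + 1) ⊆ F → f (i + 1) ⊆ F' → f (i + 2) ⊆ F' → F ≠ F') ∧
  (∀ i, f i ∩ f (i + 2) = ∅)

/-- A zigzag: a zigzag sequence together with its (minimal) period. -/
structure Zigzag where
  seq : ℕ → Finset V
  period : ℕ
  period_pos : 0 < period
  periodic : ∀ i, seq (i + period) = seq i
  period_min : ∀ m, 0 < m → (∀ i, seq (i + m) = seq i) → period ≤ m
  isZigzag : T.IsZigzagSeq seq

variable {T}

/-- Two zigzags are the same cyclic sequence (up to a shift). -/
def Zigzag.Equiv (Z Z' : T.Zigzag) : Prop := ∃ k, ∀ i, Z'.seq i = Z.seq (i + k)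

/-- `Z'` is the reversal of `Z` (up to a shift). -/
def Zigzag.IsReverseOf (Z' Z : T.Zigzag) : Prop :=
  ∃ k, ∀ i, Z'.seq i = Z.seq (k + Z.period - i % Z.period)

/-- The zigzag `Z` contains an edge of the face `F`. -/
def Zigzag.Meets (Z : T.Zigzag) (F : Finset V) : Prop := ∃ i, Z.seq i ⊆ F

/-- `F` is the `i`-th face of the face shadow of `Z`, i.e. the face containing
the `i`-th and `(i+1)`-st edges of `Z`. -/
def Zigzag.ShadowAt (Z : T.Zigzag) (i : ℕ) (F : Finset V) : Prop :=
  F ∈ T.faces ∧ Z.seq i ⊆ F ∧ Z.seq (i + 1) ⊆ F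

/-- At position `i`, the zigzag `Z` traverses the oriented edge from `x`
to `y` (the head `y` is the vertex shared with the next edge). -/
def Zigzag.Passes (Z : T.Zigzag) (i : ℕ) (x y : V) : Prop :=
  Z.seq i = {x, y} ∧ x ≠ y ∧ y ∈ Z.seq (i + 1)

variable (T)

/-- The triangulation is locally z-knotted in the face `F`:
`𝒵(F) = {Z, Z⁻¹}`. -/
def LocallyZKnotted (F : Finset V) : Prop :=
  (∃ Z : T.Zigzag, Z.Meets F) ∧
  ∀ Z Z' : T.Zigzag, Z.Meets F → Z'.Meets F → Z.Equiv Z' ∨ Z'.IsReverseOf Z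

/-- The triangulation is z-knotted: it has exactly one zigzag up to
reversal. -/
def ZKnotted : Prop :=
  Nonempty T.Zigzag ∧ ∀ Z Z' : T.Zigzag, Z.Equiv Z' ∨ Z'.IsReverseOf Z

/-- The z-monodromy relation of the face `F`: `M_F` sends the oriented edge
`(x,y)` of `F` to the oriented edge `(u,v)` of `F`.  Here `(u,v)` is the first
oriented edge of `F` occurring in the zigzag through `D_F⁻¹(x,y), (x,y)`
after `(x,y)`. -/
def MonodromyRel (F : Finset V) (x y u v : V) : Prop :=
  x ∈ F ∧ y ∈ F ∧
  ∃ Z : T.Zigzag, ∃ i j : ℕ,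
    (∃ z, z ∈ F ∧ z ≠ x ∧ z ≠ y ∧ Z.Passes i z x) ∧
    Z.Passes (i + 1) x y ∧
    i + 1 < j ∧ Z.Passes j u v ∧ u ∈ F ∧ v ∈ F ∧
    (∀ k, i + 1 < k → k < j → ∀ a b, a ∈ F → b ∈ F → ¬ Z.Passes k a b)

/-- The z-monodromy of `F` is the identity (type (M1)). -/
def MFIsId (F : Finset V) : Prop :=
  ∀ x y, x ∈ F → y ∈ F → x ≠ y → T.MonodromyRel F x y x y

/-- The z-monodromy of `F` is `D_F` (type (M2)). -/
def MFIsD (F : Finset V) : Prop :=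
  ∀ x y z : V, ({x, y, z} : Finset V) = F → x ≠ y → y ≠ z → x ≠ z →
    T.MonodromyRel F x y y z

/-- The z-monodromy of `F` is `D_F⁻¹` (type (M5)). -/
def MFIsDInv (F : Finset V) : Prop :=
  ∀ x y z : V, ({x, y, z} : Finset V) = F → x ≠ y → y ≠ z → x ≠ z →
    T.MonodromyRel F x y z x

/-- The z-monodromy of `F` is of type (M3):
`M_F = (-e₁,e₂,e₃)(-e₃,-e₂,e₁)` for a cycle `(e₁,e₂,e₃)` of `D_F`. -/
def MFIsM3 (F : Finset V) : Prop :=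
  ∃ x y z : V, ({x, y, z} : Finset V) = F ∧ x ≠ y ∧ y ≠ z ∧ x ≠ z ∧
    T.MonodromyRel F y x y z ∧ T.MonodromyRel F y z z x ∧
    T.MonodromyRel F z x y x ∧ T.MonodromyRel F x z z y ∧
    T.MonodromyRel F z y x y ∧ T.MonodromyRel F x y x z

/-- The z-monodromy of `F` is of type (M4):
`M_F = (e₁,-e₂)(e₂,-e₁)` with `e₃, -e₃` fixed, for a cycle `(e₁,e₂,e₃)`
of `D_F`. -/
def MFIsM4 (F : Finset V) : Prop :=
  ∃ x y z : V, ({x, y, z} : Finset V) = F ∧ x ≠ y ∧ y ≠ z ∧ x ≠ z ∧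
    T.MonodromyRel F x y z y ∧ T.MonodromyRel F z y x y ∧
    T.MonodromyRel F y z y x ∧ T.MonodromyRel F y x y z ∧
    T.MonodromyRel F z x z x ∧ T.MonodromyRel F x z x z

/-- The dual graph: vertices are faces, adjacent iff they share an edge. -/
def dualGraph : SimpleGraph {F : Finset V // F ∈ T.faces} where
  Adj A B := A ≠ B ∧ ((A : Finset V) ∩ (B : Finset V)).card = 2
  symm := by
    constructor
    intro A B h
    exact ⟨h.1.symm, by rw [Finset.inter_comm]; exact h.2⟩
  loopless := by constructor; intro A h; exact h.1 rfl

end Triangulation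

/-!
A zigzag is determined by any two consecutive edges. Hence the zigzag witnessing the
monodromy relation agrees with `Z`: whenever `Z` crosses `F` along `x → y → z`, its next visit
to `F` is a crossing that starts with the oriented edge `M_F(y, z)`. Starting from a crossing
along `a → b → c`, the next three crossings are along `bca, cab, abc` if `M_F = id`, and along
`cab, bca, abc` if `M_F = D_F`. Determinism once more makes the length of this turn a period of
`Z`, and it is the least one, since a shorter period would produce a crossing along `abc`
strictly inside the turn. During the turn `Z` traverses each of `ab, bc, ca` twice and none of
`ba, cb, ac`.
-/

theorem Finset.card_inter_eq_one_of_card_eq_two {α : Type*} [DecidableEq α] {s t : Finset α}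
    (hs : #s = 2) (ht : #t = 2) (hst : s ≠ t) (hmeet : (s ∩ t).Nonempty) : #(s ∩ t) = 1 := by
  have hlt : #(s ∩ t) < #s := by
    refine card_lt_card (ssubset_of_subset_of_ne inter_subset_left fun h => hst ?_)
    exact eq_of_subset_of_card_le (inter_eq_left.1 h) (by omega)
  have := hmeet.card_pos
  omega

theorem Function.Periodic.of_eq_add_of_le {α : Type*} {f : ℕ → α} {p d N : ℕ}
    (hf : Function.Periodic f p) (hp : 0 < p) (h : ∀ n, N ≤ n → f (n + d) = f n) :
    Function.Periodic f d := fun n => by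
  rw [← hf.nat_mul N n, ← hf.nat_mul N (n + d), add_right_comm]
  exact h _ (le_add_left (Nat.le_mul_of_pos_right N hp))

theorem Finset.insert_pair_rotate {α : Type*} [DecidableEq α] (a b c : α) :
    ({b, c, a} : Finset α) = {a, b, c} := by
  ext
  simp only [mem_insert, mem_singleton]
  tauto

namespace Triangulation

variable {V : Type} [Fintype V] [DecidableEq V] {T : Triangulation V}

theorem eq_of_edges_subset {A B e e' : Finset V} (hA : A ∈ T.faces) (hB : B ∈ T.faces)
    (he : #e = 2) (he' : #e' = 2) (hne : e ≠ e') (hmeet : (e ∩ e').Nonempty)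
    (hA' : e ∪ e' ⊆ A) (hB' : e ∪ e' ⊆ B) : A = B := by
  have hunion : #(e ∪ e') = 3 := by
    have := card_union_add_card_inter e e'
    have := card_inter_eq_one_of_card_eq_two he he' hne hmeet
    omega
  rw [← eq_of_subset_of_card_le hA' (by rw [T.card_eq A hA, hunion]),
    ← eq_of_subset_of_card_le hB' (by rw [T.card_eq B hB, hunion])]

theorem eq_or_eq_of_edge_subset {e A B C : Finset V} (he : #e = 2)
    (hA : A ∈ T.faces) (hB : B ∈ T.faces) (hC : C ∈ T.faces)
    (heA : e ⊆ A) (heB : e ⊆ B) (heC : e ⊆ C) (hAB : A ≠ B) : C = A ∨ C = B := by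
  have hpair : ({A, B} : Finset (Finset V)) = T.faces.filter (e ⊆ ·) := by
    refine eq_of_subset_of_card_le ?_ ?_
    · simp [insert_subset_iff, hA, hB, heA, heB]
    · rw [T.edge_two_faces e he ⟨A, hA, heA⟩, card_pair hAB]
  have : C ∈ ({A, B} : Finset (Finset V)) := hpair ▸ mem_filter.2 ⟨hC, heC⟩
  simpa using this

theorem eq_sdiff_of_subset_face {A e x : Finset V} (hA : A ∈ T.faces) (hmeet : (e ∩ A).Nonempty)
    (hx : #x = 2) (hxA : x ⊆ A) (hxe : Disjoint x e) : x = A \ e := by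
  refine eq_of_subset_of_card_le (subset_sdiff.2 ⟨hxA, hxe⟩) ?_
  rw [card_sdiff, T.card_eq A hA, hx]
  have := hmeet.card_pos
  omega

namespace IsZigzagSeq

variable {f g : ℕ → Finset V}

theorem card_eq_two (hf : T.IsZigzagSeq f) (i : ℕ) : #(f i) = 2 := (hf.1 i).1

theorem disjoint_add_two (hf : T.IsZigzagSeq f) (i : ℕ) : Disjoint (f i) (f (i + 2)) :=
  disjoint_iff_inter_eq_empty.2 (hf.2.2.2 i)

theorem eq_add_two (hf : T.IsZigzagSeq f) (hg : T.IsZigzagSeq g) {i j : ℕ}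
    (h0 : f i = g j) (h1 : f (i + 1) = g (j + 1)) : f (i + 2) = g (j + 2) := by
  obtain ⟨hne, hmeet, B, hB, hiB, hi1B⟩ := hf.2.1 i
  obtain ⟨-, -, A, hA, hi1A, hi2A⟩ := hf.2.1 (i + 1)
  obtain ⟨-, -, B', hB', hjB', hj1B'⟩ := hg.2.1 j
  obtain ⟨-, -, A', hA', hj1A', hj2A'⟩ := hg.2.1 (j + 1)
  have hBB' : B' = B := eq_of_edges_subset hB' hB (hf.card_eq_two i) (hf.card_eq_two (i + 1))
    hne hmeet (h0 ▸ h1 ▸ union_subset hjB' hj1B') (union_subset hiB hi1B)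
  have hAA' : A' = A := by
    rcases eq_or_eq_of_edge_subset (hf.card_eq_two (i + 1)) hB hA hA' hi1B hi1A (h1 ▸ hj1A')
      (hf.2.2.1 i B hB A hA hiB hi1B hi1A hi2A) with h | h
    · exact absurd (hBB'.trans h.symm) (hg.2.2.1 j B' hB' A' hA' hjB' hj1B' hj1A' hj2A')
    · exact h
  have hmeetA : (f i ∩ A).Nonempty := hmeet.mono (inter_subset_inter_left hi1A)
  rw [eq_sdiff_of_subset_face hA hmeetA (hf.card_eq_two _) hi2A (hf.disjoint_add_two i).symm,
    eq_sdiff_of_subset_face hA hmeetA (hg.card_eq_two _) (hAA' ▸ hj2A')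
      (h0 ▸ (hg.disjoint_add_two j).symm)]

theorem eq_add (hf : T.IsZigzagSeq f) (hg : T.IsZigzagSeq g) {i j : ℕ}
    (h0 : f i = g j) (h1 : f (i + 1) = g (j + 1)) (t : ℕ) : f (i + t) = g (j + t) := by
  induction t using Nat.strong_induction_on with
  | _ t ih =>
    match t, ih with
    | 0, _ => exact h0
    | 1, _ => exact h1
    | t + 2, ih => exact hf.eq_add_two hg (ih t (by omega)) (ih (t + 1) (by omega))

theorem not_subset_add_two {F : Finset V} (hF3 : #F ≤ 3) (hf : T.IsZigzagSeq f) {k : ℕ}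
    (hk : f k ⊆ F) : ¬ f (k + 2) ⊆ F := fun hk2 => by
  have := card_le_card (union_subset hk hk2)
  rw [card_union_of_disjoint (hf.disjoint_add_two k), hf.card_eq_two, hf.card_eq_two] at this
  omega

theorem subset_or_subset_of_subset_add_one {F : Finset V} (hF : F ∈ T.faces)
    (hf : T.IsZigzagSeq f) {k : ℕ} (hk : f (k + 1) ⊆ F) : f k ⊆ F ∨ f (k + 2) ⊆ F := by
  obtain ⟨-, -, B, hB, hkB, hk1B⟩ := hf.2.1 k
  obtain ⟨-, -, A, hA, hk1A, hk2A⟩ := hf.2.1 (k + 1)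
  rcases eq_or_eq_of_edge_subset (hf.card_eq_two _) hB hA hF hk1B hk1A hk
    (hf.2.2.1 k B hB A hA hkB hk1B hk1A hk2A) with rfl | rfl
  exacts [Or.inl hkB, Or.inr hk2A]

end IsZigzagSeq

namespace Zigzag

variable {Z W : T.Zigzag} {F : Finset V} {k m : ℕ} {u v w x y z : V}

theorem passes_add_period : Z.Passes (k + Z.period) u v ↔ Z.Passes k u v := by
  simp only [Passes, add_right_comm k Z.period 1, Z.periodic]

theorem passes_periodic (Z : T.Zigzag) (u v : V) :
    Function.Periodic (fun i => Z.Passes i u v) Z.period := fun _ => propext passes_add_period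

theorem passes_iff_of_seq_eq {l : ℕ} (h0 : W.seq k = Z.seq l)
    (h1 : W.seq (k + 1) = Z.seq (l + 1)) : W.Passes k u v ↔ Z.Passes l u v := by
  simp only [Passes, h0, h1]

theorem Passes.seq_subset (h : Z.Passes k u v) (hu : u ∈ F) (hv : v ∈ F) : Z.seq k ⊆ F :=
  h.1 ▸ insert_subset hu (singleton_subset_iff.2 hv)

theorem Passes.left_mem (h : Z.Passes k u v) : u ∈ Z.seq k := h.1 ▸ mem_insert_self u {v}

theorem Passes.right_mem (h : Z.Passes k u v) : v ∈ Z.seq k :=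
  h.1 ▸ mem_insert_of_mem (mem_singleton_self v)

theorem Passes.notMem_seq_add_two (h : Z.Passes k u v) : v ∉ Z.seq (k + 2) :=
  disjoint_left.1 (Z.isZigzag.disjoint_add_two k) h.right_mem

theorem exists_passes (Z : T.Zigzag) (k : ℕ) : ∃ u v, Z.Passes k u v := by
  obtain ⟨v, hv⟩ := (Z.isZigzag.2.1 k).2.1
  have hvk := (mem_inter.1 hv).1
  obtain ⟨u, hu⟩ := card_eq_one.1
    (by rw [card_erase_of_mem hvk, Z.isZigzag.card_eq_two] : #((Z.seq k).erase v) = 1)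
  have hne : u ≠ v := ne_of_mem_erase (hu ▸ mem_singleton_self u)
  refine ⟨u, v, ?_, hne, (mem_inter.1 hv).2⟩
  rw [← insert_erase hvk, hu, pair_comm]

theorem Passes.unique (h : Z.Passes k x y) (h' : Z.Passes k u v) : u = x ∧ v = y := by
  have hmeet := card_inter_eq_one_of_card_eq_two (Z.isZigzag.card_eq_two k)
    (Z.isZigzag.card_eq_two (k + 1)) (Z.isZigzag.2.1 k).1 (Z.isZigzag.2.1 k).2.1
  have hvy : v = y := card_le_one.1 hmeet.le v (mem_inter.2 ⟨h'.right_mem, h'.2.2⟩)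
    y (mem_inter.2 ⟨h.right_mem, h.2.2⟩)
  subst hvy
  have hu : u ∈ ({x, v} : Finset V) := h.1 ▸ h'.left_mem
  simp only [mem_insert, mem_singleton] at hu
  exact ⟨hu.resolve_right h'.2.1, rfl⟩

theorem Passes.exists_passes_add_one (h : Z.Passes k u v) : ∃ w, Z.Passes (k + 1) v w := by
  obtain ⟨a, w, ha⟩ := Z.exists_passes (k + 1)
  have hv : v ∈ ({a, w} : Finset V) := ha.1 ▸ h.2.2
  simp only [mem_insert, mem_singleton] at hv
  rcases hv with rfl | rfl
  · exact ⟨w, ha⟩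
  · exact absurd ha.2.2 h.notMem_seq_add_two

theorem Passes.ne_of_passes_add_one (h : Z.Passes k u v) (h' : Z.Passes (k + 1) v w) :
    u ≠ w := by
  rintro rfl
  exact (Z.isZigzag.2.1 k).1 (by rw [h.1, h'.1, pair_comm])

def CrossesAt (Z : T.Zigzag) (F : Finset V) (m : ℕ) (x y z : V) : Prop :=
  ({x, y, z} : Finset V) = F ∧ Z.Passes m x y ∧ Z.Passes (m + 1) y z

-- The crossing at `m` occupies the positions `m` and `m + 1`.
def AvoidsBetween (Z : T.Zigzag) (F : Finset V) (m m' : ℕ) : Prop :=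
  m + 1 < m' ∧ ∀ k ∈ Set.Ioo (m + 1) m', ¬ Z.seq k ⊆ F

namespace CrossesAt

theorem ne (h : Z.CrossesAt F m x y z) : x ≠ y ∧ y ≠ z ∧ x ≠ z :=
  ⟨h.2.1.2.1, h.2.2.2.1, h.2.1.ne_of_passes_add_one h.2.2⟩

theorem seq_subset (h : Z.CrossesAt F m x y z) : Z.seq m ⊆ F :=
  h.2.1.seq_subset (h.1 ▸ by simp) (h.1 ▸ by simp)

theorem seq_add_one_subset (h : Z.CrossesAt F m x y z) : Z.seq (m + 1) ⊆ F :=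
  h.2.2.seq_subset (h.1 ▸ by simp) (h.1 ▸ by simp)

theorem passes_iff (h : Z.CrossesAt F m x y z) : Z.Passes m u v ↔ u = x ∧ v = y :=
  ⟨h.2.1.unique, by rintro ⟨rfl, rfl⟩; exact h.2.1⟩

theorem passes_add_one_iff (h : Z.CrossesAt F m x y z) :
    Z.Passes (m + 1) u v ↔ u = y ∧ v = z :=
  ⟨h.2.2.unique, by rintro ⟨rfl, rfl⟩; exact h.2.2⟩

theorem add_period (h : Z.CrossesAt F m x y z) : Z.CrossesAt F (m + Z.period) x y z := by
  refine ⟨h.1, passes_add_period.2 h.2.1, ?_⟩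
  rw [add_right_comm]
  exact passes_add_period.2 h.2.2

end CrossesAt

theorem exists_crossesAt (hF : F ∈ T.faces) (hZ : Z.Meets F) :
    ∃ m x y z, Z.CrossesAt F m x y z := by
  obtain ⟨k, hk⟩ := hZ
  have hk' : Z.seq (k + Z.period - 1 + 1) ⊆ F := by
    rwa [Nat.sub_add_cancel (by have := Z.period_pos; omega), Z.periodic]
  obtain ⟨m, hm, hm1⟩ : ∃ m, Z.seq m ⊆ F ∧ Z.seq (m + 1) ⊆ F := by
    rcases Z.isZigzag.subset_or_subset_of_subset_add_one hF hk' with h | h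
    exacts [⟨_, h, hk'⟩, ⟨_, hk', h⟩]
  obtain ⟨x, y, hxy⟩ := Z.exists_passes m
  obtain ⟨z, hyz⟩ := hxy.exists_passes_add_one
  refine ⟨m, x, y, z, ?_, hxy, hyz⟩
  refine eq_of_subset_of_card_le ?_ ?_
  · simp only [insert_subset_iff, singleton_subset_iff]
    exact ⟨hm hxy.left_mem, hm hxy.right_mem, hm1 hyz.right_mem⟩
  · rw [T.card_eq F hF, card_eq_three.2 ⟨x, y, z, hxy.2.1, hxy.ne_of_passes_add_one hyz,
      hyz.2.1, rfl⟩]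

theorem Passes.crossesAt_of_not_subset (hF : F ∈ T.faces) (h : Z.Passes (k + 1) u v)
    (hk : ¬ Z.seq k ⊆ F) (huvw : ({u, v, w} : Finset V) = F) (huw : u ≠ w) (hvw : v ≠ w) :
    Z.CrossesAt F (k + 1) u v w := by
  have hnext : Z.seq (k + 1 + 1) ⊆ F :=
    (Z.isZigzag.subset_or_subset_of_subset_add_one hF
      (h.seq_subset (huvw ▸ by simp) (huvw ▸ by simp))).resolve_left hk
  obtain ⟨w', hw'⟩ := h.exists_passes_add_one
  have hw'F : w' ∈ ({u, v, w} : Finset V) := huvw ▸ hnext hw'.right_mem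
  obtain rfl : w' = w := by
    simpa [(h.ne_of_passes_add_one hw').symm, hw'.2.1.symm] using hw'F
  exact ⟨huvw, h, hw'⟩

theorem CrossesAt.exists_next_of_monodromyRel (hF : F ∈ T.faces) (h : Z.CrossesAt F m x y z)
    (hmono : T.MonodromyRel F y z u v) (huvw : ({u, v, w} : Finset V) = F) (huw : u ≠ w)
    (hvw : v ≠ w) : ∃ m', Z.AvoidsBetween F m m' ∧ Z.CrossesAt F m' u v w := by
  obtain ⟨-, -, W, i, j, ⟨x', hx'F, hx'y, hx'z, hWi⟩, hWi1, hij, hWj, huF, hvF, hbetween⟩ :=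
    hmono
  obtain rfl : x' = x := by
    have : x' ∈ ({x, y, z} : Finset V) := h.1 ▸ hx'F
    simpa [hx'y, hx'z] using this
  have hsync := W.isZigzag.eq_add Z.isZigzag (hWi.1.trans h.2.1.1.symm)
    (hWi1.1.trans h.2.2.1.symm)
  have htransfer : ∀ t a b, W.Passes (i + t) a b ↔ Z.Passes (m + t) a b := fun t _ _ =>
    passes_iff_of_seq_eq (hsync t) (by simpa only [add_assoc] using hsync (t + 1))
  obtain ⟨n, rfl⟩ : ∃ n, j = i + (n + 2) := ⟨j - i - 2, by omega⟩
  have hgap : Z.AvoidsBetween F m (m + (n + 2)) := by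
    refine ⟨by omega, fun k ⟨hk1, hk2⟩ hkF => ?_⟩
    obtain ⟨a, b, hab⟩ := Z.exists_passes k
    obtain ⟨t, rfl⟩ : ∃ t, k = m + t := ⟨k - m, by omega⟩
    exact hbetween (i + t) (by omega) (by omega) a b (hkF hab.left_mem) (hkF hab.right_mem)
      ((htransfer t a b).2 hab)
  have hPuv : Z.Passes (m + n + 1 + 1) u v := (htransfer (n + 2) u v).1 hWj
  have hprev : ¬ Z.seq (m + n + 1) ⊆ F := by
    rcases n with _ | n
    · exact absurd (hPuv.seq_subset huF hvF)
        (Z.isZigzag.not_subset_add_two (T.card_eq F hF).le h.seq_subset)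
    · exact hgap.2 _ ⟨by omega, by omega⟩
  exact ⟨_, hgap, hPuv.crossesAt_of_not_subset hF hprev huvw huw hvw⟩

theorem CrossesAt.eq_of_avoidsBetween {m' : ℕ} (hF3 : #F ≤ 3) (h : Z.CrossesAt F m x y z)
    (hgap : Z.AvoidsBetween F m m') (hmk : m ≤ k) (hk : k < m') (hk0 : Z.seq k ⊆ F)
    (hk1 : Z.seq (k + 1) ⊆ F) : k = m := by
  rcases (by omega : k = m ∨ k = m + 1 ∨ m + 1 < k) with rfl | rfl | hk'
  · rfl
  · exact absurd hk1 (Z.isZigzag.not_subset_add_two hF3 h.seq_subset)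
  · exact absurd hk0 (hgap.2 k ⟨hk', hk⟩)

theorem CrossesAt.card_filter_passes_Ico {m' : ℕ}
    [DecidablePred fun k => Z.Passes k u v] (h : Z.CrossesAt F m x y z)
    (hgap : Z.AvoidsBetween F m m') (hu : u ∈ F) (hv : v ∈ F) :
    #{k ∈ Ico m m' | Z.Passes k u v} = Multiset.count (u, v) {(x, y), (y, z)} := by
  have := hgap.1
  rw [card_filter, sum_eq_sum_Ico_succ_bot (by omega), sum_eq_sum_Ico_succ_bot (by omega),
    sum_eq_zero fun k hk => if_neg fun hP =>
      hgap.2 k (by simp only [mem_Ico] at hk; exact ⟨by omega, hk.2⟩) (hP.seq_subset hu hv)]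
  simp only [h.passes_iff, h.passes_add_one_iff, Multiset.insert_eq_cons, Multiset.count_cons,
    Multiset.count_singleton, Prod.mk.injEq, zero_add, add_comm]

theorem period_eq_of_turn {i0 i1 i2 i3 : ℕ} {a b c x₁ y₁ z₁ x₂ y₂ z₂ : V} (hF3 : #F ≤ 3)
    (h0 : Z.CrossesAt F i0 a b c) (h1 : Z.CrossesAt F i1 x₁ y₁ z₁)
    (h2 : Z.CrossesAt F i2 x₂ y₂ z₂) (h3 : Z.CrossesAt F i3 a b c)
    (g01 : Z.AvoidsBetween F i0 i1) (g12 : Z.AvoidsBetween F i1 i2)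
    (g23 : Z.AvoidsBetween F i2 i3) (hne₁ : (x₁, y₁) ≠ (a, b)) (hne₂ : (x₂, y₂) ≠ (a, b)) :
    i0 + Z.period = i3 := by
  have := g01.1; have := g12.1; have := g23.1; have := Z.period_pos
  have hsync := Z.isZigzag.eq_add Z.isZigzag (h0.2.1.1.trans h3.2.1.1.symm)
    (h0.2.2.1.trans h3.2.2.1.symm)
  have hturn : Function.Periodic Z.seq (i3 - i0) :=
    Function.Periodic.of_eq_add_of_le Z.periodic Z.period_pos fun n (hn : i0 ≤ n) => by
      simpa [show i0 + (n - i0) = n by omega, show i3 + (n - i0) = n + (i3 - i0) by omega]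
        using (hsync (n - i0)).symm
  have hle := Z.period_min _ (by omega) hturn
  by_contra hne
  have hc := h0.add_period
  have hcF := hc.seq_subset
  have hcF1 := hc.seq_add_one_subset
  rcases (by omega : i0 + Z.period < i1 ∨ (i1 ≤ i0 + Z.period ∧ i0 + Z.period < i2) ∨
      (i2 ≤ i0 + Z.period ∧ i0 + Z.period < i3)) with h | ⟨h, h'⟩ | ⟨h, h'⟩
  · have := h0.eq_of_avoidsBetween hF3 g01 (by omega) h hcF hcF1
    omega
  · rw [h1.eq_of_avoidsBetween hF3 g12 h h' hcF hcF1] at hc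
    obtain ⟨rfl, rfl⟩ := h1.2.1.unique hc.2.1
    exact hne₁ rfl
  · rw [h2.eq_of_avoidsBetween hF3 g23 h h' hcF hcF1] at hc
    obtain ⟨rfl, rfl⟩ := h2.2.1.unique hc.2.1
    exact hne₂ rfl

theorem card_filter_passes_range_of_turn {i0 i1 i2 i3 : ℕ} {a b c x₁ y₁ z₁ x₂ y₂ z₂ : V}
    [DecidablePred fun k => Z.Passes k u v]
    (hF3 : #F ≤ 3) (h0 : Z.CrossesAt F i0 a b c) (h1 : Z.CrossesAt F i1 x₁ y₁ z₁)
    (h2 : Z.CrossesAt F i2 x₂ y₂ z₂) (h3 : Z.CrossesAt F i3 a b c)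
    (g01 : Z.AvoidsBetween F i0 i1) (g12 : Z.AvoidsBetween F i1 i2)
    (g23 : Z.AvoidsBetween F i2 i3) (hne₁ : (x₁, y₁) ≠ (a, b)) (hne₂ : (x₂, y₂) ≠ (a, b))
    (hu : u ∈ F) (hv : v ∈ F) :
    #{k ∈ range Z.period | Z.Passes k u v} = Multiset.count (u, v)
      ({(a, b), (b, c)} + {(x₁, y₁), (y₁, z₁)} + {(x₂, y₂), (y₂, z₂)}) := by
  have := g01.1; have := g12.1; have := g23.1
  rw [← Nat.count_eq_card_filter_range,
    ← Nat.filter_Ico_card_eq_of_periodic i0 _ _ (Z.passes_periodic u v),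
    period_eq_of_turn hF3 h0 h1 h2 h3 g01 g12 g23 hne₁ hne₂, Multiset.count_add,
    Multiset.count_add, ← h0.card_filter_passes_Ico g01 hu hv,
    ← h1.card_filter_passes_Ico g12 hu hv, ← h2.card_filter_passes_Ico g23 hu hv,
    card_filter, card_filter, card_filter, card_filter,
    sum_Ico_consecutive _ (by omega) (by omega), sum_Ico_consecutive _ (by omega) (by omega)]

theorem not_passes_of_card_filter_eq_zero [DecidablePred fun k => Z.Passes k u v]
    (h : #{k ∈ range Z.period | Z.Passes k u v} = 0) (i : ℕ) : ¬ Z.Passes i u v := fun hP =>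
  filter_eq_empty_iff.1 (card_eq_zero.1 h) (mem_range.2 (Nat.mod_lt i Z.period_pos))
    (((Z.passes_periodic u v).map_mod_nat i).symm ▸ hP)

theorem CrossesAt.card_filter_passes_range_of_mFIsId {i0 : ℕ} {a b c : V}
    [DecidablePred fun k => Z.Passes k u v] (hF : F ∈ T.faces)
    (hid : T.MFIsId F) (h0 : Z.CrossesAt F i0 a b c) (hu : u ∈ F) (hv : v ∈ F) :
    #{k ∈ range Z.period | Z.Passes k u v} =
      Multiset.count (u, v) (2 • {(a, b), (b, c), (c, a)}) := by
  obtain ⟨hab, hbc, hac⟩ := h0.ne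
  have hmem : a ∈ F ∧ b ∈ F ∧ c ∈ F := by simp [← h0.1]
  obtain ⟨i1, g01, h1⟩ := h0.exists_next_of_monodromyRel hF (hid b c hmem.2.1 hmem.2.2 hbc)
    (insert_pair_rotate a b c ▸ h0.1) hab.symm hac.symm
  obtain ⟨i2, g12, h2⟩ := h1.exists_next_of_monodromyRel hF (hid c a hmem.2.2 hmem.1 hac.symm)
    (insert_pair_rotate b c a ▸ h1.1) hbc.symm hab
  obtain ⟨i3, g23, h3⟩ := h2.exists_next_of_monodromyRel hF (hid a b hmem.1 hmem.2.1 hab)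
    h0.1 hac hbc
  rw [card_filter_passes_range_of_turn (T.card_eq F hF).le h0 h1 h2 h3 g01 g12 g23
    (by simp [hab.symm]) (by simp [hac.symm]) hu hv]
  simp only [Multiset.insert_eq_cons, Multiset.count_cons, Multiset.count_add,
    Multiset.count_singleton, Multiset.count_nsmul]
  split_ifs <;> omega

theorem CrossesAt.card_filter_passes_range_of_mFIsD {i0 : ℕ} {a b c : V}
    [DecidablePred fun k => Z.Passes k u v] (hF : F ∈ T.faces)
    (hD : T.MFIsD F) (h0 : Z.CrossesAt F i0 a b c) (hu : u ∈ F) (hv : v ∈ F) :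
    #{k ∈ range Z.period | Z.Passes k u v} =
      Multiset.count (u, v) (2 • {(a, b), (b, c), (c, a)}) := by
  obtain ⟨hab, hbc, hac⟩ := h0.ne
  have hbca := insert_pair_rotate a b c ▸ h0.1
  have hcab := insert_pair_rotate b c a ▸ hbca
  obtain ⟨i1, g01, h1⟩ := h0.exists_next_of_monodromyRel hF (hD b c a hbca hbc hac.symm hab.symm)
    hcab hbc.symm hab
  obtain ⟨i2, g12, h2⟩ := h1.exists_next_of_monodromyRel hF (hD a b c h0.1 hab hbc hac)
    hbca hab.symm hac.symm
  obtain ⟨i3, g23, h3⟩ := h2.exists_next_of_monodromyRel hF (hD c a b hcab hac.symm hab hbc.symm)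
    h0.1 hac hbc
  rw [card_filter_passes_range_of_turn (T.card_eq F hF).le h0 h1 h2 h3 g01 g12 g23
    (by simp [hac.symm]) (by simp [hab.symm]) hu hv]
  simp only [Multiset.insert_eq_cons, Multiset.count_cons, Multiset.count_add,
    Multiset.count_singleton, Multiset.count_nsmul]
  split_ifs <;> omega

end Zigzag

end Triangulation

open scoped Classical in
theorem M1_M2_zigzag_same_direction_general {V : Type} [Fintype V] [DecidableEq V]
    (T : Triangulation V) (F : Finset V) (hF : F ∈ T.faces)
    (htype : T.MFIsId F ∨ T.MFIsD F)
    (Z : T.Zigzag) (hZ : Z.Meets F) :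
    ∃ x y z : V, ({x, y, z} : Finset V) = F ∧ x ≠ y ∧ y ≠ z ∧ x ≠ z ∧
      ∀ u v : V, ((u, v) = (x, y) ∨ (u, v) = (y, z) ∨ (u, v) = (z, x)) →
        ((Finset.range Z.period).filter fun i => Z.Passes i u v).card = 2 ∧
        ∀ i, ¬ Z.Passes i v u := by
  obtain ⟨i0, a, b, c, h0⟩ := Z.exists_crossesAt hF hZ
  obtain ⟨hab, hbc, hac⟩ := h0.ne
  have hcount : ∀ u ∈ F, ∀ v ∈ F, #{i ∈ range Z.period | Z.Passes i u v} =
      Multiset.count (u, v) (2 • {(a, b), (b, c), (c, a)}) :=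
    htype.elim (fun hid _ hu _ hv => h0.card_filter_passes_range_of_mFIsId hF hid hu hv)
      (fun hD _ hu _ hv => h0.card_filter_passes_range_of_mFIsD hF hD hu hv)
  have hmem : a ∈ F ∧ b ∈ F ∧ c ∈ F := by simp [← h0.1]
  refine ⟨a, b, c, h0.1, hab, hbc, hac, ?_⟩
  rintro u v (h | h | h) <;> obtain ⟨rfl, rfl⟩ := Prod.mk.inj h <;>
    refine ⟨?_, Z.not_passes_of_card_filter_eq_zero ?_⟩ <;>
    rw [hcount _ (by simp [hmem]) _ (by simp [hmem])] <;>
    simp [hab, hbc, hac, hab.symm, hbc.symm, hac.symm]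

open scoped Classical in
/-- if `F` is locally z-knotted with z-monodromy of type (M1)
or (M2), then the unique zigzag through `F` passes through each edge of `F`
exactly twice, both times in the same direction: it traverses twice each of
the three oriented edges forming one cycle of `D_F`. -/
theorem M1_M2_zigzag_same_direction {V : Type} [Fintype V] [DecidableEq V]
    (T : Triangulation V) (F : Finset V) (hF : F ∈ T.faces)
    (hloc : T.LocallyZKnotted F) (htype : T.MFIsId F ∨ T.MFIsD F)
    (Z : T.Zigzag) (hZ : Z.Meets F) :
    ∃ x y z : V, ({x, y, z} : Finset V) = F ∧ x ≠ y ∧ y ≠ z ∧ x ≠ z ∧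
      ∀ u v : V, ((u, v) = (x, y) ∨ (u, v) = (y, z) ∨ (u, v) = (z, x)) →
        ((Finset.range Z.period).filter fun i => Z.Passes i u v).card = 2 ∧
        ∀ i, ¬ Z.Passes i v u :=
  M1_M2_zigzag_same_direction_general T F hF htype Z hZ
end

section
/- The 3-gonal bipyramid (two apex vertices a, b each joined to all vertices of a triangle 1,2,3) is a z-knotted triangulation of the sphere: up to reversal it has exactly one zigzag, namely the cyclic sequence a1,12,2b,b3,31,1a,a2,23,3b,b1,12,2a,a3,31,1b,b2,23,3a of length 18. -/
open Finset

/-- The faces of the 3-gonal bipyramid: vertices `0,1,2` form the triangle,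
`3` and `4` are the two apexes. -/
def bp3Faces : Finset (Finset (Fin 5)) :=
  {{3, 0, 1}, {3, 1, 2}, {3, 2, 0}, {4, 0, 1}, {4, 1, 2}, {4, 2, 0}}

/-- The cyclic list of edges
`a1,12,2b,b3,31,1a,a2,23,3b,b1,12,2a,a3,31,1b,b2,23,3a`
(with `1,2,3,a,b` encoded as `0,1,2,3,4`). -/
def bp3ZigzagList : List (Finset (Fin 5)) :=
  [{3, 0}, {0, 1}, {1, 4}, {4, 2}, {2, 0}, {0, 3}, {3, 1}, {1, 2}, {2, 4},
   {4, 0}, {0, 1}, {1, 3}, {3, 2}, {2, 0}, {0, 4}, {4, 1}, {1, 2}, {2, 3}]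

/-!
In a triangulation every edge lies in exactly two faces, so a zigzag is determined by any two
consecutive edges: the next edge lies in the other face through the second edge and avoids the
vertex shared by the first two. The zigzag condition is symmetric under reversal, hence a zigzag
`Z` that passes through every pair of adjacent edges, in one order or the other, is the only one up
to reversal: any zigzag agrees with `Z` or with its reverse on its first two edges, hence
everywhere. For `BP₃` the 18 consecutive pairs of the given sequence and their reversals are all
36 ordered pairs of adjacent edges (9 edges, each adjacent to 4 others), a finite check.
-/

theorem Finset.eq_erase_of_subset_of_card {α : Type*} [DecidableEq α] {s t : Finset α} {a : α}
    (hst : s ⊆ t) (ha : a ∈ t) (has : a ∉ s) (hcard : t.card = s.card + 1) : s = t.erase a :=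
  Finset.eq_of_subset_of_card_le (Finset.subset_erase.2 ⟨hst, has⟩)
    (by rw [Finset.card_erase_of_mem ha]; omega)

theorem Relation.reflTransGen_of_hub {α : Type*} {r : α → α → Prop} [Std.Symm r] {s : Finset α}
    {x₀ : α} (h : ∀ x ∈ s, x = x₀ ∨ r x₀ x ∨ ∃ y ∈ s, r x₀ y ∧ r y x) :
    ∀ x ∈ s, ∀ y ∈ s, ReflTransGen r x y := by
  have hub : ∀ x ∈ s, ReflTransGen r x₀ x := by
    intro x hx
    obtain rfl | hx₀x | ⟨y, -, hx₀y, hyx⟩ := h x hx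
    · exact .refl
    · exact .single hx₀x
    · exact (ReflTransGen.single hx₀y).tail hyx
  exact fun x hx y hy => (Std.Symm.symm _ _ (hub x hx)).trans (hub y hy)

namespace Triangulation

variable {V : Type} [Fintype V] [DecidableEq V] (T : Triangulation V)

def EdgeAdj (a b : Finset V) : Prop :=
  T.IsEdge a ∧ T.IsEdge b ∧ a ≠ b ∧ (a ∩ b).Nonempty ∧ ∃ F ∈ T.faces, a ⊆ F ∧ b ⊆ F

/-- The face condition of `IsZigzagSeq` is left out: it follows from `a ∩ c = ∅`
(`ne_of_subset_of_inter_eq_empty`). -/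
def IsZigzagTriple (a b c : Finset V) : Prop :=
  T.EdgeAdj a b ∧ T.EdgeAdj b c ∧ a ∩ c = ∅

instance (a b : Finset V) : Decidable (T.EdgeAdj a b) := by
  unfold EdgeAdj IsEdge; infer_instance

instance (a b c : Finset V) : Decidable (T.IsZigzagTriple a b c) := by
  unfold IsZigzagTriple; infer_instance

variable {T}

theorem EdgeAdj.symm {a b : Finset V} (h : T.EdgeAdj a b) : T.EdgeAdj b a := by
  obtain ⟨ha, hb, hab, hint, F, hF, haF, hbF⟩ := h
  exact ⟨hb, ha, hab.symm, Finset.inter_comm a b ▸ hint, F, hF, hbF, haF⟩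

theorem IsZigzagTriple.symm {a b c : Finset V} (h : T.IsZigzagTriple a b c) :
    T.IsZigzagTriple c b a :=
  ⟨h.2.1.symm, h.1.symm, Finset.inter_comm a c ▸ h.2.2⟩

theorem ne_of_subset_of_inter_eq_empty {a c F G : Finset V} (ha : a.card = 2) (hc : c.card = 2)
    (hF : F ∈ T.faces) (haF : a ⊆ F) (hcG : c ⊆ G) (hac : a ∩ c = ∅) : F ≠ G := by
  rintro rfl
  have := Finset.card_le_card (Finset.union_subset haF hcG)
  rw [Finset.card_union_of_disjoint (Finset.disjoint_iff_inter_eq_empty.2 hac), ha, hc,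
    T.card_eq F hF] at this
  omega

theorem isZigzagSeq_iff {f : ℕ → Finset V} :
    T.IsZigzagSeq f ↔ ∀ i, T.IsZigzagTriple (f i) (f (i + 1)) (f (i + 2)) := by
  constructor
  · rintro ⟨hedge, hadj, -, hdisj⟩ i
    exact ⟨⟨hedge i, hedge (i + 1), hadj i⟩, ⟨hedge (i + 1), hedge (i + 2), hadj (i + 1)⟩, hdisj i⟩
  · intro h
    refine ⟨fun i => (h i).1.1, fun i => (h i).1.2.2, ?_, fun i => (h i).2.2⟩
    intro i F hF F' _ hiF _ _ hi2F'
    exact ne_of_subset_of_inter_eq_empty (h i).1.1.1 (h i).2.1.2.1.1 hF hiF hi2F' (h i).2.2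

theorem isZigzagSeq_of_periodic {f : ℕ → Finset V} {p : ℕ} (hp : 0 < p)
    (hf : Function.Periodic f p) (h : ∀ i < p, T.IsZigzagTriple (f i) (f (i + 1)) (f (i + 2))) :
    T.IsZigzagSeq f := by
  refine isZigzagSeq_iff.2 fun i => ?_
  have hmod (j : ℕ) : f (i % p + j) = f (i + j) := by
    rw [← hf.map_mod_nat, Nat.mod_add_mod, hf.map_mod_nat]
  have := h (i % p) (Nat.mod_lt i hp)
  rwa [hf.map_mod_nat, hmod 1, hmod 2] at this

theorem eq_of_edge_subset_of_ne {b F G G' : Finset V} (hb : b.card = 2)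
    (hF : F ∈ T.faces) (hG : G ∈ T.faces) (hG' : G' ∈ T.faces)
    (hbF : b ⊆ F) (hbG : b ⊆ G) (hbG' : b ⊆ G') (hFG : F ≠ G) (hFG' : F ≠ G') : G = G' := by
  by_contra hGG'
  have htwo := T.edge_two_faces b hb ⟨F, hF, hbF⟩
  have : 2 < (T.faces.filter fun H => b ⊆ H).card :=
    Finset.two_lt_card.2 ⟨F, by simp [hF, hbF], G, by simp [hG, hbG], G', by simp [hG', hbG'],
      hFG, hFG', hGG'⟩
  omega

/-- The edge after `a, b` in a zigzag is determined: it is the face on `b` other than the one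
on `a, b`, with the vertex `a ∩ b` removed. -/
theorem IsZigzagTriple.unique {a b c c' : Finset V} (h : T.IsZigzagTriple a b c)
    (h' : T.IsZigzagTriple a b c') : c = c' := by
  obtain ⟨⟨ha, -, -, ⟨v, hv⟩, F, hF, haF, hbF⟩, ⟨hb, hc, -, -, G, hG, hbG, hcG⟩, hac⟩ := h
  obtain ⟨-, ⟨-, hc', -, -, G', hG', hbG', hc'G'⟩, hac'⟩ := h'
  rw [Finset.mem_inter] at hv
  have hGG' : G = G' := eq_of_edge_subset_of_ne hb.1 hF hG hG' hbF hbG hbG'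
    (ne_of_subset_of_inter_eq_empty ha.1 hc.1 hF haF hcG hac)
    (ne_of_subset_of_inter_eq_empty ha.1 hc'.1 hF haF hc'G' hac')
  subst hGG'
  have hvG : v ∈ G := hbG hv.2
  have hv_not_mem {d : Finset V} (had : a ∩ d = ∅) : v ∉ d := fun hvd =>
    Finset.notMem_empty v (had ▸ Finset.mem_inter.2 ⟨hv.1, hvd⟩)
  rw [Finset.eq_erase_of_subset_of_card hcG hvG (hv_not_mem hac) (by rw [T.card_eq G hG, hc.1]),
    Finset.eq_erase_of_subset_of_card hc'G' hvG (hv_not_mem hac') (by rw [T.card_eq G hG, hc'.1])]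

theorem IsZigzagSeq.eq_shift {f g : ℕ → Finset V} (hf : T.IsZigzagSeq f) (hg : T.IsZigzagSeq g)
    {k : ℕ} (h0 : f 0 = g k) (h1 : f 1 = g (k + 1)) (i : ℕ) : f i = g (i + k) := by
  suffices ∀ i, f i = g (i + k) ∧ f (i + 1) = g (i + k + 1) from (this i).1
  intro i
  induction i with
  | zero => simpa using ⟨h0, h1⟩
  | succ n ih =>
    refine ⟨ih.2.trans (by rw [Nat.add_right_comm]), ?_⟩
    have hfn := isZigzagSeq_iff.1 hf n
    rw [ih.1, ih.2] at hfn
    rw [show n + 1 + k + 1 = n + k + 2 by omega]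
    exact hfn.unique (isZigzagSeq_iff.1 hg (n + k))

theorem IsZigzagSeq.eq_reverse {f g : ℕ → Finset V} (hf : T.IsZigzagSeq f)
    (hg : T.IsZigzagSeq g) {N : ℕ} (h0 : f 0 = g (N + 1)) (h1 : f 1 = g N) {i : ℕ} (hi : i ≤ N) :
    f i = g (N + 1 - i) := by
  suffices ∀ i ≤ N, f i = g (N + 1 - i) ∧ f (i + 1) = g (N - i) from (this i hi).1
  intro i
  induction i with
  | zero => simpa using ⟨h0, h1⟩
  | succ n ih =>
    intro hn
    obtain ⟨hfn, hfn1⟩ := ih (by omega)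
    refine ⟨hfn1.trans (by congr 1; omega), ?_⟩
    have hstep := isZigzagSeq_iff.1 hf n
    rw [hfn, hfn1] at hstep
    have hrev := (isZigzagSeq_iff.1 hg (N - n - 1)).symm
    rw [show N - n - 1 + 2 = N + 1 - n by omega, show N - n - 1 + 1 = N - n by omega] at hrev
    rw [hstep.unique hrev, show N - n - 1 = N - (n + 1) by omega]

theorem Zigzag.equiv_of_seq_eq {Z Z' : T.Zigzag} {k : ℕ} (h0 : Z'.seq 0 = Z.seq k)
    (h1 : Z'.seq 1 = Z.seq (k + 1)) : Z.Equiv Z' :=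
  ⟨k, Z'.isZigzag.eq_shift Z.isZigzag h0 h1⟩

theorem Zigzag.isReverseOf_of_seq_eq {Z Z' : T.Zigzag} {k : ℕ} (h0 : Z'.seq 0 = Z.seq (k + 1))
    (h1 : Z'.seq 1 = Z.seq k) : Z'.IsReverseOf Z := by
  refine ⟨k + 1, fun i => ?_⟩
  have hper : Function.Periodic Z.seq ((i / Z.period + 1) * Z.period) :=
    Function.Periodic.nat_mul Z.periodic _
  have hi := Nat.div_add_mod i Z.period
  have hr := Nat.mod_lt i Z.period_pos
  rw [Z'.isZigzag.eq_reverse Z.isZigzag (N := k + (i / Z.period + 1) * Z.period)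
    (by rw [Nat.add_right_comm, hper]; exact h0) (by rw [hper]; exact h1)]
  all_goals rw [Nat.succ_mul, Nat.mul_comm (i / Z.period)]
  · congr 1
    omega
  · omega

theorem Zigzag.equiv_or_isReverseOf {Z : T.Zigzag}
    (hZ : ∀ a b, T.EdgeAdj a b →
      ∃ k, (Z.seq k = a ∧ Z.seq (k + 1) = b) ∨ (Z.seq (k + 1) = a ∧ Z.seq k = b))
    (Z' : T.Zigzag) : Z.Equiv Z' ∨ Z'.IsReverseOf Z := by
  obtain ⟨k, ⟨h0, h1⟩ | ⟨h0, h1⟩⟩ := hZ _ _ (isZigzagSeq_iff.1 Z'.isZigzag 0).1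
  · exact .inl (equiv_of_seq_eq h0.symm h1.symm)
  · exact .inr (isReverseOf_of_seq_eq h0.symm h1.symm)

end Triangulation

open Triangulation

def bp3 : Triangulation (Fin 5) where
  faces := bp3Faces
  faces_nonempty := by decide
  card_eq := by decide
  edge_two_faces := by decide
  inter_le := by decide
  connected := by
    let R (A B : Finset (Fin 5)) : Prop := A ∈ bp3Faces ∧ B ∈ bp3Faces ∧ (A ∩ B).card = 2
    have : Std.Symm R := ⟨fun A B ⟨hA, hB, hAB⟩ => ⟨hB, hA, Finset.inter_comm A B ▸ hAB⟩⟩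
    exact Relation.reflTransGen_of_hub (r := R) (x₀ := {3, 0, 1}) (by decide)

def bp3Seq (i : ℕ) : Finset (Fin 5) := bp3ZigzagList.getD (i % 18) ∅

theorem bp3Seq_periodic : Function.Periodic bp3Seq 18 := fun i => by
  simp only [bp3Seq, Nat.add_mod_right]

def bp3Zigzag : bp3.Zigzag where
  seq := bp3Seq
  period := 18
  period_pos := by norm_num
  periodic := bp3Seq_periodic
  period_min m hm hper := by
    have : ∀ m < 18, 0 < m → bp3Seq m ≠ bp3Seq 0 ∨ bp3Seq (m + 1) ≠ bp3Seq 1 := by decide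
    by_contra! hm18
    obtain h | h := this m hm18 hm
    · exact h (by simpa using hper 0)
    · exact h (by simpa [Nat.add_comm] using hper 1)
  isZigzag := isZigzagSeq_of_periodic (by norm_num) bp3Seq_periodic (by decide)

theorem bp3Seq_edgeAdj : ∀ a b, bp3.EdgeAdj a b →
    ∃ k, (bp3Seq k = a ∧ bp3Seq (k + 1) = b) ∨ (bp3Seq (k + 1) = a ∧ bp3Seq k = b) := by
  have : ∀ a b, bp3.EdgeAdj a b →
      ∃ k < 18, (bp3Seq k = a ∧ bp3Seq (k + 1) = b) ∨ (bp3Seq (k + 1) = a ∧ bp3Seq k = b) := by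
    decide
  exact fun a b hab => (this a b hab).imp fun _ => And.right

/-- the 3-gonal bipyramid is a z-knotted triangulation of the
sphere whose unique zigzag (up to reversal) is the cyclic sequence
`a1,12,2b,b3,31,1a,a2,23,3b,b1,12,2a,a3,31,1b,b2,23,3a` of length 18. -/
theorem bp3_zknotted :
    ∃ T : Triangulation (Fin 5), T.faces = bp3Faces ∧
      ∃ Z : T.Zigzag, Z.period = 18 ∧
        (∀ i, Z.seq i = bp3ZigzagList.getD (i % 18) ∅) ∧
        ∀ Z' : T.Zigzag, Z.Equiv Z' ∨ Z'.IsReverseOf Z :=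
  ⟨bp3, rfl, bp3Zigzag, rfl, fun _ => rfl, Zigzag.equiv_or_isReverseOf bp3Seq_edgeAdj⟩
end
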